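/- Random-XZ measurements are tomographically complete on real pure states: if |ψ⟩ and |φ⟩ are n-qubit unit vectors with all real coefficients in the computational basis, and for every product unitary U = ⊗_i U^{α_i} with α_i ∈ {X,Z} (U^Z = I, U^X = Hadamard) and every bit-string b one has |⟨b|U|ψ⟩|² = |⟨b|U|φ⟩|², then |ψ⟩⟨ψ| = |φ⟩⟨φ| (equivalently |ψ⟩ = ±|φ⟩). -/

import Mathlib

open Matrix

noncomputable section

/-- Hadamard matrix. -/
def Hm : Matrix (Fin 2) (Fin 2) ℂ := ((Real.sqrt 2 : ℂ))⁻¹ • !![1, 1; 1, -1]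

/-- The product measurement unitary `U = ⊗_i U^{α_i}` with `U^X = H`, `U^Z = I`. -/
def Umeas (n : ℕ) (α : Fin n → Bool) :
    Matrix (Fin n → Fin 2) (Fin n → Fin 2) ℂ :=
  fun b b' => ∏ i, (if α i then Hm else 1) (b i) (b' i)

/-!
Induction on the number of qubits, with the invariant `φ = ψ ∨ φ = -ψ`. Split off the first
qubit and write `ψ_j` for the slice of `ψ` with first bit `j`. Measuring the first qubit in Z
shows that `ψ_j` and `φ_j` are indistinguishable, and measuring it in X with outcome 0 shows the
same for `ψ_0 + ψ_1` and `φ_0 + φ_1`. By induction `φ_0 = ±ψ_0`, `φ_1 = ±ψ_1` and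
`φ_0 + φ_1 = ±(ψ_0 + ψ_1)`; the first two signs can only disagree if one slice vanishes, so
`φ = ±ψ`. Reality is used only for zero qubits, where real numbers of equal modulus agree up to
sign.
-/

theorem eq_or_eq_neg_of_normSq_eq {z w : ℂ} (hz : z.im = 0) (hw : w.im = 0)
    (h : Complex.normSq z = Complex.normSq w) : w = z ∨ w = -z := by
  simp only [Complex.normSq_apply, hz, hw, mul_zero, add_zero] at h
  rcases mul_self_eq_mul_self_iff.mp h.symm with h | h
  · exact .inl (Complex.ext h (hw.trans hz.symm))
  · exact .inr (Complex.ext (by simpa using h) (by simp [hz, hw]))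

theorem eq_or_eq_neg_of_blocks {M : Type*} [AddCommGroup M]
    {u v u' v' : M} (hu : u' = u ∨ u' = -u) (hv : v' = v ∨ v' = -v)
    (huv : u' + v' = u + v ∨ u' + v' = -(u + v)) :
    (u' = u ∧ v' = v) ∨ (u' = -u ∧ v' = -v) := by
  rcases hu with rfl | rfl <;> rcases hv with rfl | rfl
  · exact .inl ⟨rfl, rfl⟩
  · rcases huv with h | h
    · exact .inl ⟨rfl, add_left_cancel h⟩
    · exact .inr ⟨add_right_cancel (h.trans (neg_add _ _)), rfl⟩
  · rcases huv with h | h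
    · exact .inl ⟨add_right_cancel h, rfl⟩
    · exact .inr ⟨rfl, add_left_cancel (h.trans (neg_add _ _))⟩
  · exact .inr ⟨rfl, rfl⟩

def slice {n : ℕ} {M : Type*} (ψ : (Fin (n + 1) → Fin 2) → M) (j : Fin 2) :
    (Fin n → Fin 2) → M :=
  fun c => ψ (Fin.cons j c)

theorem eq_of_slice_eq {n : ℕ} {M : Type*} {ψ φ : (Fin (n + 1) → Fin 2) → M}
    (h : ∀ j, slice ψ j = slice φ j) : ψ = φ := by
  funext b
  rw [← Fin.cons_self_tail b]
  exact congrFun (h (b 0)) (Fin.tail b)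

theorem slice_umeas_mulVec (n : ℕ) (a : Bool) (α : Fin n → Bool)
    (ψ : (Fin (n + 1) → Fin 2) → ℂ) (j : Fin 2) :
    slice (Umeas (n + 1) (Fin.cons a α) *ᵥ ψ) j
      = ∑ k, (if a then Hm else 1) j k • (Umeas n α *ᵥ slice ψ k) := by
  funext b
  simp only [slice, Matrix.mulVec, dotProduct, Umeas, Finset.sum_apply, Pi.smul_apply, smul_eq_mul]
  rw [← (Fin.consEquiv (fun _ => Fin 2)).sum_comp, Fintype.sum_prod_type]
  refine Finset.sum_congr rfl fun k _ => ?_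
  rw [Finset.mul_sum]
  refine Finset.sum_congr rfl fun c _ => ?_
  simp only [Fin.consEquiv_apply, Fin.prod_univ_succ, Fin.cons_zero, Fin.cons_succ]
  rw [show (Fin.consEquiv fun _ => Fin 2) (k, c) = Fin.cons k c from rfl]
  ring

theorem slice_umeas_false_mulVec (n : ℕ) (α : Fin n → Bool)
    (ψ : (Fin (n + 1) → Fin 2) → ℂ) (j : Fin 2) :
    slice (Umeas (n + 1) (Fin.cons false α) *ᵥ ψ) j = Umeas n α *ᵥ slice ψ j := by
  simp [slice_umeas_mulVec, Matrix.one_apply]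

theorem slice_umeas_true_mulVec_zero (n : ℕ) (α : Fin n → Bool)
    (ψ : (Fin (n + 1) → Fin 2) → ℂ) :
    slice (Umeas (n + 1) (Fin.cons true α) *ᵥ ψ) 0
      = ((Real.sqrt 2 : ℂ))⁻¹ • Umeas n α *ᵥ (slice ψ 0 + slice ψ 1) := by
  simp [slice_umeas_mulVec, Hm, Matrix.mulVec_add, Fin.sum_univ_two, smul_add]

theorem umeas_zero_mulVec (α : Fin 0 → Bool) (ψ : (Fin 0 → Fin 2) → ℂ) :
    Umeas 0 α *ᵥ ψ = ψ := by
  have : Umeas 0 α = 1 := by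
    ext b b'
    simp [Umeas, Subsingleton.elim b b', Matrix.one_apply]
  rw [this, one_mulVec]

def XZIndistinguishable (n : ℕ) (ψ φ : (Fin n → Fin 2) → ℂ) : Prop :=
  ∀ α b, Complex.normSq ((Umeas n α *ᵥ ψ) b) = Complex.normSq ((Umeas n α *ᵥ φ) b)

namespace XZIndistinguishable

variable {n : ℕ} {ψ φ : (Fin (n + 1) → Fin 2) → ℂ}

theorem restrict_slice (h : XZIndistinguishable (n + 1) ψ φ) (j : Fin 2) :
    XZIndistinguishable n (slice ψ j) (slice φ j) := by
  intro α b
  have hb : Complex.normSq (slice (_ *ᵥ ψ) j b) = Complex.normSq (slice (_ *ᵥ φ) j b) :=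
    h (Fin.cons false α) (Fin.cons j b)
  rwa [slice_umeas_false_mulVec, slice_umeas_false_mulVec] at hb

theorem restrict_slice_add (h : XZIndistinguishable (n + 1) ψ φ) :
    XZIndistinguishable n (slice ψ 0 + slice ψ 1) (slice φ 0 + slice φ 1) := by
  intro α b
  have hb : Complex.normSq (slice (_ *ᵥ ψ) 0 b) = Complex.normSq (slice (_ *ᵥ φ) 0 b) :=
    h (Fin.cons true α) (Fin.cons 0 b)
  simp only [slice_umeas_true_mulVec_zero, Pi.smul_apply, smul_eq_mul, Complex.normSq_mul] at hb
  exact mul_left_cancel₀ (by simp) hb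

end XZIndistinguishable

theorem eq_or_eq_neg_of_xzIndistinguishable {n : ℕ} {ψ φ : (Fin n → Fin 2) → ℂ}
    (hψ : ∀ b, (ψ b).im = 0) (hφ : ∀ b, (φ b).im = 0) (h : XZIndistinguishable n ψ φ) :
    φ = ψ ∨ φ = -ψ := by
  induction n with
  | zero =>
    have hb := h default default
    simp only [umeas_zero_mulVec] at hb
    rcases eq_or_eq_neg_of_normSq_eq (hψ default) (hφ default) hb with e | e
    · exact .inl (funext fun b => by rwa [Subsingleton.elim b default])
    · exact .inr (funext fun b => by rwa [Subsingleton.elim b default])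
  | succ n ih =>
    have hslice (j : Fin 2) := ih (fun c => hψ _) (fun c => hφ _) (h.restrict_slice j)
    have hsum :=
      ih (fun c => by simp [slice, hψ]) (fun c => by simp [slice, hφ]) h.restrict_slice_add
    rcases eq_or_eq_neg_of_blocks (hslice 0) (hslice 1) hsum with ⟨h0, h1⟩ | ⟨h0, h1⟩
    · exact .inl (eq_of_slice_eq (Fin.forall_fin_two.mpr ⟨h0, h1⟩))
    · exact .inr (eq_of_slice_eq (Fin.forall_fin_two.mpr ⟨h0, h1⟩))

theorem stmt6_general (n : ℕ) (ψ φ : (Fin n → Fin 2) → ℂ)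
    (hψr : ∀ b, (ψ b).im = 0) (hφr : ∀ b, (φ b).im = 0)
    (h : ∀ α : Fin n → Bool, ∀ b : Fin n → Fin 2,
      Complex.normSq ((Umeas n α).mulVec ψ b) = Complex.normSq ((Umeas n α).mulVec φ b)) :
    Matrix.vecMulVec ψ (star ψ) = Matrix.vecMulVec φ (star φ) := by
  obtain rfl | rfl := eq_or_eq_neg_of_xzIndistinguishable hψr hφr h
  · rfl
  · rw [star_neg, neg_vecMulVec, vecMulVec_neg, neg_neg]

/-- Tomographic completeness of random-XZ measurements on real pure states: if two
real unit vectors give the same outcome probabilities `|⟨b|U|ψ⟩|²` for every product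
XZ unitary `U` and bit-string `b`, then `|ψ⟩⟨ψ| = |φ⟩⟨φ|`. -/
theorem stmt6 (n : ℕ) (ψ φ : (Fin n → Fin 2) → ℂ)
    (hψu : ∑ b, Complex.normSq (ψ b) = 1) (hφu : ∑ b, Complex.normSq (φ b) = 1)
    (hψr : ∀ b, (ψ b).im = 0) (hφr : ∀ b, (φ b).im = 0)
    (h : ∀ α : Fin n → Bool, ∀ b : Fin n → Fin 2,
      Complex.normSq ((Umeas n α).mulVec ψ b) = Complex.normSq ((Umeas n α).mulVec φ b)) :
    Matrix.vecMulVec ψ (star ψ) = Matrix.vecMulVec φ (star φ) :=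
  stmt6_general n ψ φ hψr hφr h
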